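/- arXiv:math/0105091 — 3 statements merged into one kernel-verified Lean document; each statement's English description precedes it below -/
import Mathlib

section
/- Let n be a positive integer and let f : ℝ^n → ℝ^n be a topical function. Then f is indecomposable if and only if the stabilised aggregated graph G^∞(f) is strongly connected. -/
/-- The characteristic vector `e_J` of a set `J` of indices. -/
noncomputable def eVec {n : ℕ} (J : Set (Fin n)) : Fin n → ℝ :=
  J.indicator fun _ => 1

/-- A function `ℝ → ℝ` is unbounded above. -/
def Unbdd (g : ℝ → ℝ) : Prop := ∀ M : ℝ, ∃ u : ℝ, M ≤ g u

/-- Edge of the aggregated graph `Γ(P)` from the block of `i` to the block of `j`,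
where the partition `P` is encoded by the (equivalence) relation `r`:
there exists `i'` in the block of `i` with `u ↦ f_{i'}(u·e_J)` unbounded above,
`J` being the block of `j`. -/
def BlockEdge {n : ℕ} (f : (Fin n → ℝ) → (Fin n → ℝ)) (r : Fin n → Fin n → Prop)
    (i j : Fin n) : Prop :=
  ∃ i', r i i' ∧ Unbdd fun u => f (u • eVec {k | r j k}) i'

/-- The relation encoding the next partition `P_{k+1}`: two indices are related
iff their blocks lie in a common strongly connected component of `Γ(P_k)`. -/
def NextRel {n : ℕ} (f : (Fin n → ℝ) → (Fin n → ℝ)) (r : Fin n → Fin n → Prop) :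
    Fin n → Fin n → Prop :=
  fun i j => r i j ∨
    (Relation.ReflTransGen (BlockEdge f r) i j ∧ Relation.ReflTransGen (BlockEdge f r) j i)

/-- `f` is decomposable: there is a non-trivial partition `I ∪ J = {1,…,n}`
(here `I = Jᶜ`) with `u ↦ f_i(u·e_J)` bounded above for each `i ∈ I`. -/
def Decomposable {n : ℕ} (f : (Fin n → ℝ) → (Fin n → ℝ)) : Prop :=
  ∃ J : Set (Fin n), J.Nonempty ∧ Jᶜ.Nonempty ∧
    ∀ i ∈ Jᶜ, ∃ M : ℝ, ∀ u : ℝ, f (u • eVec J) i ≤ M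

open Relation

section Aux

variable {n : ℕ} {f : (Fin n → ℝ) → (Fin n → ℝ)}

/-- Boundedness transfers to subsets. -/
lemma bdd_subset (hmono : Monotone f) {i : Fin n} {J J' : Set (Fin n)} (hJ : J' ⊆ J)
    {M : ℝ} (hM : ∀ u : ℝ, f (u • eVec J) i ≤ M) : ∀ u : ℝ, f (u • eVec J') i ≤ M := by
  intro u
  rcases le_or_gt 0 u with hu | hu
  · refine le_trans ?_ (hM u)
    refine hmono (fun k => ?_) i
    simp only [Pi.smul_apply, smul_eq_mul]
    exact mul_le_mul_of_nonneg_left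
      (Set.indicator_le_indicator_of_subset hJ (fun _ => zero_le_one) k) hu
  · refine le_trans ?_ (hM 0)
    refine hmono (fun k => ?_) i
    simp only [Pi.smul_apply, smul_eq_mul, zero_mul]
    exact mul_nonpos_of_nonpos_of_nonneg hu.le (Set.indicator_nonneg (fun _ _ => zero_le_one) k)

lemma not_unbdd_iff {g : ℝ → ℝ} : ¬ Unbdd g ↔ ∃ M, ∀ u, g u ≤ M := by
  constructor
  · intro h
    unfold Unbdd at h
    push_neg at h
    obtain ⟨M, hM⟩ := h
    exact ⟨M, fun u => (hM u).le⟩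
  · rintro ⟨M, hM⟩ h
    obtain ⟨u, hu⟩ := h (M + 1)
    linarith [hM u]

lemma block_eq {r : Fin n → Fin n → Prop} (hr : Equivalence r) {i j : Fin n} (hij : r i j) :
    {k | r i k} = {k | r j k} := by
  ext k
  exact ⟨fun h => hr.trans (hr.symm hij) h, fun h => hr.trans hij h⟩

lemma blockEdge_congr_left {r : Fin n → Fin n → Prop} (hr : Equivalence r) {i j m : Fin n}
    (hij : r i j) (h : BlockEdge f r j m) : BlockEdge f r i m := by
  obtain ⟨i', hi', hu⟩ := h
  exact ⟨i', hr.trans hij hi', hu⟩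

lemma blockEdge_congr_right {r : Fin n → Fin n → Prop} (hr : Equivalence r) {i j m : Fin n}
    (hij : r i j) (h : BlockEdge f r m j) : BlockEdge f r m i := by
  unfold BlockEdge at *
  rwa [block_eq hr hij]

lemma path_congr_left {r : Fin n → Fin n → Prop} (hr : Equivalence r) {i j m : Fin n}
    (hij : r i j) (h : ReflTransGen (BlockEdge f r) j m) :
    r i m ∨ ReflTransGen (BlockEdge f r) i m := by
  rcases h.cases_head with h | ⟨x, hx, hxm⟩
  · exact Or.inl (h ▸ hij)
  · exact Or.inr (ReflTransGen.head (blockEdge_congr_left hr hij hx) hxm)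

lemma path_congr_right {r : Fin n → Fin n → Prop} (hr : Equivalence r) {i j m : Fin n}
    (hjm : r j m) (h : ReflTransGen (BlockEdge f r) i j) :
    r i m ∨ ReflTransGen (BlockEdge f r) i m := by
  rcases h.cases_tail with h | ⟨x, hix, hxj⟩
  · exact Or.inl (h ▸ hjm)
  · exact Or.inr (hix.tail (blockEdge_congr_right hr (hr.symm hjm) hxj))

lemma nextRel_equiv {r : Fin n → Fin n → Prop} (hr : Equivalence r) :
    Equivalence (NextRel f r) := by
  constructor
  · intro x; exact Or.inl (hr.refl x)
  · rintro x y (h | ⟨h1, h2⟩)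
    · exact Or.inl (hr.symm h)
    · exact Or.inr ⟨h2, h1⟩
  · rintro x y z (h | ⟨h1, h2⟩) (h' | ⟨h1', h2'⟩)
    · exact Or.inl (hr.trans h h')
    · -- r x y, scc y z
      rcases path_congr_left (f := f) hr h h1' with h'' | p1
      · exact Or.inl h''
      · rcases path_congr_right (f := f) hr (hr.symm h) h2' with h'' | p2
        · exact Or.inl (hr.symm h'')
        · exact Or.inr ⟨p1, p2⟩
    · -- scc x y, r y z
      rcases path_congr_right (f := f) hr h' h1 with h'' | p1
      · exact Or.inl h''
      · rcases path_congr_left (f := f) hr (hr.symm h') h2 with h'' | p2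
        · exact Or.inl (hr.symm h'')
        · exact Or.inr ⟨p1, p2⟩
    · exact Or.inr ⟨h1.trans h1', h2'.trans h2⟩

lemma iter_equiv (f : (Fin n → ℝ) → (Fin n → ℝ)) (k : ℕ) :
    Equivalence ((NextRel f)^[k] Eq) := by
  induction k with
  | zero => exact eq_equivalence
  | succ k ih =>
    rw [Function.iterate_succ_apply']
    exact nextRel_equiv ih

lemma iter_stable_of_stable {k : ℕ}
    (h : ∀ i j, NextRel f ((NextRel f)^[k] Eq) i j → (NextRel f)^[k] Eq i j) :
    ∀ m, k ≤ m → (NextRel f)^[m] Eq = (NextRel f)^[k] Eq := by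
  have hstep : NextRel f ((NextRel f)^[k] Eq) = (NextRel f)^[k] Eq := by
    funext i j
    exact propext ⟨h i j, fun h' => Or.inl h'⟩
  intro m hm
  obtain ⟨d, rfl⟩ := Nat.exists_eq_add_of_le hm
  clear hm
  induction d with
  | zero => rfl
  | succ d ih =>
    rw [show k + (d + 1) = (k + d) + 1 from rfl, Function.iterate_succ_apply', ih, hstep]

/-- Stability of the n-th iterate. -/
lemma stable_at_n (hn : 0 < n) (f : (Fin n → ℝ) → (Fin n → ℝ)) :
    ∀ i j, NextRel f ((NextRel f)^[n] Eq) i j → (NextRel f)^[n] Eq i j := by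
  by_contra hcon
  push_neg at hcon
  -- every level k ≤ n is unstable
  have hall : ∀ k, k ≤ n → ∃ i j, NextRel f ((NextRel f)^[k] Eq) i j ∧
      ¬ (NextRel f)^[k] Eq i j := by
    intro k hk
    by_contra h
    push_neg at h
    obtain ⟨i, j, h1, h2⟩ := hcon
    have := iter_stable_of_stable (f := f) (k := k) (fun i j hij => h i j hij) n hk
    rw [this] at h1 h2
    exact h2 (h i j h1)
  -- cardinality of quotients strictly decreases
  classical
  let s : ℕ → Setoid (Fin n) := fun k => ⟨(NextRel f)^[k] Eq, iter_equiv f k⟩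
  haveI : ∀ k, Fintype (Quotient (s k)) := fun k => Fintype.ofFinite _
  have hFsound : ∀ k (a b : Fin n), (s k).r a b → (s (k+1)).r a b := by
    intro k a b h
    show (NextRel f)^[k+1] Eq a b
    rw [Function.iterate_succ_apply']
    exact Or.inl h
  let F : ∀ k, Quotient (s k) → Quotient (s (k+1)) := fun k =>
    Quot.map (fun a => a) (hFsound k)
  have hsurj : ∀ k, Function.Surjective (F k) := by
    intro k q
    obtain ⟨a, rfl⟩ := Quotient.exists_rep q
    exact ⟨Quotient.mk _ a, rfl⟩
  have hdec : ∀ k, k ≤ n →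
      Fintype.card (Quotient (s (k+1))) < Fintype.card (Quotient (s k)) := by
    intro k hk
    obtain ⟨i, j, h1, h2⟩ := hall k hk
    refine Fintype.card_lt_of_surjective_not_injective _ (hsurj k) ?_
    intro hinj
    apply h2
    have heq : F k (Quotient.mk (s k) i) = F k (Quotient.mk (s k) j) := by
      show (Quotient.mk (s (k+1)) i) = Quotient.mk (s (k+1)) j
      apply Quotient.sound
      show (NextRel f)^[k+1] Eq i j
      rw [Function.iterate_succ_apply']
      exact h1
    exact Quotient.exact (hinj heq)
  have hcard : ∀ k, k ≤ n → Fintype.card (Quotient (s k)) + k ≤ n := by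
    intro k
    induction k with
    | zero =>
      intro _
      simpa using Fintype.card_le_of_surjective (Quotient.mk (s 0)) (Quotient.exists_rep)
    | succ k ih =>
      intro hk
      have h1 := hdec k (Nat.le_of_succ_le hk)
      have h2 := ih (Nat.le_of_succ_le hk)
      omega
  have hpos : 0 < Fintype.card (Quotient (s n)) :=
    @Fintype.card_pos _ _ ⟨Quotient.mk _ ⟨0, hn⟩⟩
  have := hcard n le_rfl
  omega

end Aux

/-- The stabilised partition `P_N` equals `P_{n+1}`, encoded by iterating
`NextRel` `n` times starting from the partition into singletons (`Eq`).
`G^∞(f)` is strongly connected iff any two of its (singleton-SCC) blocks are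
joined by a directed path. -/
theorem indecomposable_iff_aggregated_graph_strongly_connected
    (n : ℕ) (hn : 0 < n) (f : (Fin n → ℝ) → (Fin n → ℝ))
    (htop : ∀ (x : Fin n → ℝ) (h : ℝ), f (fun i => x i + h) = fun i => f x i + h)
    (hmono : Monotone f) :
    ¬ Decomposable f ↔
      ∀ i j : Fin n, (NextRel f)^[n] Eq i j ∨
        Relation.ReflTransGen (BlockEdge f ((NextRel f)^[n] Eq)) i j := by
  set R := (NextRel f)^[n] Eq with hR
  have hReq : Equivalence R := iter_equiv f n
  have hstab := stable_at_n hn f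
  constructor
  · -- indecomposable → strongly connected
    intro hnd
    by_contra h
    push_neg at h
    obtain ⟨i₀, j₀, hRij, hpath⟩ := h
    apply hnd
    -- find a "source" block: a j with no incoming edge from another block
    have hsource : ∃ j : Fin n, ∀ i, ¬ R i j → ¬ BlockEdge f R i j := by
      by_contra hs
      push_neg at hs
      choose prev hprev1 hprev2 using hs
      -- infinite descent
      let g : ℕ → Fin n := fun m => prev^[m] j₀
      have hgE : ∀ m, BlockEdge f R (g (m+1)) (g m) := by
        intro m
        have : g (m+1) = prev (g m) := Function.iterate_succ_apply' prev m j₀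
        rw [this]
        exact hprev2 (g m)
      have hgR : ∀ m, ¬ R (g (m+1)) (g m) := by
        intro m
        have : g (m+1) = prev (g m) := Function.iterate_succ_apply' prev m j₀
        rw [this]
        exact hprev1 (g m)
      have hpath_down : ∀ c d, ReflTransGen (BlockEdge f R) (g (c + d)) (g c) := by
        intro c d
        induction d with
        | zero => exact ReflTransGen.refl
        | succ d ih =>
          exact ReflTransGen.head (hgE (c + d)) ih
      obtain ⟨a, b, hab, heq⟩ := Finite.exists_ne_map_eq_of_infinite g
      wlog hlt : a < b generalizing a b
      · exact this b a hab.symm heq.symm (by omega)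
      -- b ≥ a + 1; g a = g b
      have hba : a + 1 ≤ b := hlt
      have hp1 : ReflTransGen (BlockEdge f R) (g b) (g (a+1)) := by
        obtain ⟨d, rfl⟩ := Nat.exists_eq_add_of_le hba
        exact hpath_down (a+1) d
      have hp2 : ReflTransGen (BlockEdge f R) (g (a+1)) (g a) :=
        ReflTransGen.single (hgE a)
      -- from R (g a) (g b) and path g b → g (a+1), get path g a → g (a+1)
      have hRgab : R (g a) (g b) := heq ▸ hReq.refl _
      rcases path_congr_left (f := f) hReq hRgab hp1 with hcase | hp3
      · exact hgR a (hReq.symm hcase)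
      · exact hgR a (hReq.symm (hstab _ _ (Or.inr ⟨hp3, hp2⟩)))
    obtain ⟨j, hj⟩ := hsource
    refine ⟨{k | R j k}, ⟨j, hReq.refl j⟩, ⟨?_, ?_⟩⟩
    · -- complement nonempty
      by_contra hc
      rw [Set.not_nonempty_iff_eq_empty, Set.compl_empty_iff] at hc
      have h1 : R j i₀ := by have := Set.eq_univ_iff_forall.mp hc i₀; exact this
      have h2 : R j j₀ := Set.eq_univ_iff_forall.mp hc j₀
      exact hRij (hReq.trans (hReq.symm h1) h2)
    · intro i hi
      have hiR : ¬ R i j := fun h => hi (hReq.symm h)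
      have := hj i hiR
      have hb : ¬ Unbdd fun u => f (u • eVec {k | R j k}) i := by
        intro hu
        exact this ⟨i, hReq.refl i, hu⟩
      exact not_unbdd_iff.mp hb
  · -- strongly connected → indecomposable
    intro hsc hd
    obtain ⟨J, ⟨j₀, hj₀⟩, ⟨i₀, hi₀⟩, hbdd⟩ := hd
    -- invariant: r never relates across the partition, for every iterate
    have key : ∀ k, ∀ i ∈ Jᶜ, ∀ j ∈ J, ¬ (NextRel f)^[k] Eq i j ∧ ¬ (NextRel f)^[k] Eq j i := by
      intro k
      induction k with
      | zero =>
        intro i hi j hj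
        constructor <;> · intro h; subst h; exact hi hj
      | succ k ih =>
        -- first: no edge from Jᶜ to J at level k
        set r := (NextRel f)^[k] Eq with hr
        have hstay : ∀ i ∈ Jᶜ, ∀ i', r i i' → i' ∈ Jᶜ := by
          intro i hi i' hii' hi'
          exact (ih i hi i' hi').1 hii'
        have hblock : ∀ j ∈ J, {k' | r j k'} ⊆ J := by
          intro j hj k' hk'
          by_contra hk''
          exact (ih k' hk'' j hj).2 hk'
        have hnoedge : ∀ i ∈ Jᶜ, ∀ j ∈ J, ¬ BlockEdge f r i j := by
          rintro i hi j hj ⟨i', hii', hu⟩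
          have hi' : i' ∈ Jᶜ := hstay i hi i' hii'
          obtain ⟨M, hM⟩ := hbdd i' hi'
          have := bdd_subset hmono (hblock j hj) hM
          exact not_unbdd_iff.mpr ⟨M, this⟩ hu
        have hnopath : ∀ i ∈ Jᶜ, ∀ j ∈ J, ¬ ReflTransGen (BlockEdge f r) i j := by
          intro i hi j hj hp
          induction hp using ReflTransGen.head_induction_on with
          | refl => exact hi hj
          | head hbc _ ih' =>
            rename_i a c _
            by_cases hc : c ∈ J
            · exact hnoedge a hi c hc hbc
            · exact ih' hc
        intro i hi j hj
        rw [Function.iterate_succ_apply', ← hr]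
        constructor
        · rintro (h | ⟨h1, h2⟩)
          · exact (ih i hi j hj).1 h
          · exact hnopath i hi j hj h1
        · rintro (h | ⟨h1, h2⟩)
          · exact (ih i hi j hj).2 h
          · exact hnopath i hi j hj h2
    have := key n i₀ hi₀ j₀ hj₀
    rcases hsc i₀ j₀ with h | h
    · exact this.1 h
    · -- path i₀ → j₀ at level n contradicts hnopath at level n
      -- redo the no-path argument at level n
      have hstay : ∀ i ∈ Jᶜ, ∀ i', R i i' → i' ∈ Jᶜ := by
        intro i hi i' hii' hi'
        exact (key n i hi i' hi').1 hii'
      have hblock : ∀ j ∈ J, {k' | R j k'} ⊆ J := by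
        intro j hj k' hk'
        by_contra hk''
        exact (key n k' hk'' j hj).2 hk'
      have hnoedge : ∀ i ∈ Jᶜ, ∀ j ∈ J, ¬ BlockEdge f R i j := by
        rintro i hi j hj ⟨i', hii', hu⟩
        obtain ⟨M, hM⟩ := hbdd i' (hstay i hi i' hii')
        exact not_unbdd_iff.mpr ⟨M, bdd_subset hmono (hblock j hj) hM⟩ hu
      have hnopath : ∀ i ∈ Jᶜ, ∀ j ∈ J, ¬ ReflTransGen (BlockEdge f R) i j := by
        intro i hi j hj hp
        induction hp using ReflTransGen.head_induction_on with
        | refl => exact hi hj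
        | head hbc _ ih' =>
          rename_i a c _
          by_cases hc : c ∈ J
          · exact hnoedge a hi c hc hbc
          · exact ih' hc
      exact hnopath i₀ hi₀ j₀ hj₀ h
end

section
/- Let n be a positive integer and let f : ℝ^n → ℝ^n be a topical function whose associated directed graph G(f) is strongly connected. Then for every λ ∈ ℝ the super-eigenspace S^λ(f) is bounded in the Hilbert semi-norm, i.e. there exists M ≥ 0 such that ⊤(x) − ⊥(x) ≤ M for all x ∈ S^λ(f). -/
/-- `⊤(x) = max_i x_i`. -/
noncomputable def topV {n : ℕ} (x : Fin n → ℝ) : ℝ := ⨆ i, x i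

/-- `⊥(x) = min_i x_i`. -/
noncomputable def botV {n : ℕ} (x : Fin n → ℝ) : ℝ := ⨅ i, x i

/-- Edge `i → j` in the graph `G(f)` associated to a topical function `f`:
the monotone function `u ↦ f_i(u·e_{{j}})` is unbounded above. -/
def GraphEdge {n : ℕ} (f : (Fin n → ℝ) → (Fin n → ℝ)) (i j : Fin n) : Prop :=
  ∀ M : ℝ, ∃ u : ℝ, M ≤ f (fun k => if k = j then u else 0) i

theorem super_eigenspaces_bounded_of_strongly_connected_additive
    (n : ℕ) (hn : 0 < n) (f : (Fin n → ℝ) → (Fin n → ℝ))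
    (htop : ∀ (x : Fin n → ℝ) (h : ℝ), f (fun i => x i + h) = fun i => f x i + h)
    (hmono : Monotone f)
    (hconn : ∀ i j : Fin n, Relation.ReflTransGen (GraphEdge f) i j) :
    ∀ lam : ℝ, ∃ M : ℝ, 0 ≤ M ∧
      ∀ x : Fin n → ℝ, (∀ i, f x i ≤ x i + lam) → topV x - botV x ≤ M := by
  classical
  intro lam
  haveI : Nonempty (Fin n) := ⟨⟨0, hn⟩⟩
  -- choose witnesses for edges
  have hu : ∀ (i j : Fin n) (C : ℝ), ∃ u : ℝ, 0 ≤ u ∧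
      (GraphEdge f i j → C + lam + 1 ≤ f (fun k => if k = j then u else 0) i) := by
    intro i j C
    by_cases h : GraphEdge f i j
    · obtain ⟨u, hu⟩ := h (C + lam + 1)
      refine ⟨max u 0, le_max_right _ _, fun _ => hu.trans ?_⟩
      refine hmono (fun k => ?_) i
      by_cases hk : k = j <;> simp [hk, le_max_left]
    · exact ⟨0, le_rfl, fun h' => absurd h' h⟩
  choose u hu0 hu1 using hu
  set B : ℝ → ℝ := fun C =>
    Finset.univ.sup' Finset.univ_nonempty (fun p : Fin n × Fin n => u p.1 p.2 C) with hBdef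
  have hBle : ∀ (i j : Fin n) (C : ℝ), u i j C ≤ B C := by
    intro i j C
    exact Finset.le_sup' (f := fun p : Fin n × Fin n => u p.1 p.2 C) (Finset.mem_univ (i, j))
  let Cs : ℕ → ℝ := fun k => Nat.rec (0 : ℝ) (fun _ c => max c (B c)) k
  have hCs0 : Cs 0 = 0 := rfl
  have hCsS : ∀ k, Cs (k + 1) = max (Cs k) (B (Cs k)) := fun k => rfl
  have hCsmono : ∀ k, Cs k ≤ Cs (k + 1) := fun k => le_max_left _ _
  have hCsnn : ∀ k, 0 ≤ Cs k := by
    intro k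
    induction k with
    | zero => simp [hCs0]
    | succ k ih => exact ih.trans (hCsmono k)
  refine ⟨Cs n, hCsnn n, ?_⟩
  intro x hx
  obtain ⟨v, hv⟩ := Finite.exists_min x
  set y : Fin n → ℝ := fun i => x i - x v with hy
  have hy0 : ∀ i, 0 ≤ y i := fun i => sub_nonneg.mpr (hv i)
  have hfy : ∀ i, f y i ≤ y i + lam := by
    intro i
    have hxy : x = fun i => y i + x v := by funext i; simp [hy]
    have htop' : f x = fun i => f y i + x v := by
      conv_lhs => rw [hxy]
      exact htop y (x v)
    have h1 : f y i + x v ≤ x i + lam := by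
      have h := hx i
      rw [htop'] at h
      exact h
    have h2 : x i = y i + x v := by simp [hy]
    linarith
  -- key propagation along edges
  have hkey : ∀ (i j : Fin n) (C : ℝ), GraphEdge f i j → y i ≤ C → y j ≤ u i j C := by
    intro i j C he hyi
    by_contra hlt
    push_neg at hlt
    have h1 : (fun k => if k = j then u i j C else 0) ≤ y := by
      intro k
      by_cases hk : k = j
      · subst hk; simpa using hlt.le
      · simpa [hk] using hy0 k
    have h2 : C + lam + 1 ≤ f y i := (hu1 i j C he).trans (hmono h1 i)
    have h3 : f y i ≤ y i + lam := hfy i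
    linarith
  -- crossing edge lemma
  have hcross : ∀ (S : Set (Fin n)) (a b : Fin n), Relation.ReflTransGen (GraphEdge f) a b →
      a ∈ S → b ∉ S → ∃ i ∈ S, ∃ j, j ∉ S ∧ GraphEdge f i j := by
    intro S a b hab ha
    induction hab with
    | refl => intro hb; exact absurd ha hb
    | @tail c d h1 h2 ih =>
      intro hd
      by_cases hc : c ∈ S
      · exact ⟨c, hc, d, hd, h2⟩
      · exact ih hc
  set S : ℕ → Finset (Fin n) := fun k =>
    @Finset.filter _ (fun i => y i ≤ Cs k) (fun _ => Classical.propDecidable _) Finset.univ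
    with hSdef
  have hSmono : ∀ k, S k ⊆ S (k + 1) := by
    intro k i hi
    simp only [hSdef, Finset.mem_filter, Finset.mem_univ, true_and] at hi ⊢
    exact hi.trans (hCsmono k)
  have hvS : ∀ k, v ∈ S k := by
    intro k
    simp only [hSdef, Finset.mem_filter, Finset.mem_univ, true_and, hy]
    simpa using hCsnn k
  have hP : ∀ k, S k = Finset.univ ∨ k + 1 ≤ (S k).card := by
    intro k
    induction k with
    | zero => exact Or.inr (Finset.card_pos.mpr ⟨v, hvS 0⟩)
    | succ k ih =>
      by_cases hall : S (k + 1) = Finset.univ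
      · exact Or.inl hall
      · right
        have hknu : S k ≠ Finset.univ := by
          intro h
          exact hall (Finset.eq_univ_of_forall (fun i => hSmono k (h ▸ Finset.mem_univ i)))
        obtain ⟨b, hb⟩ : ∃ b, b ∉ S k := by
          by_contra h
          push_neg at h
          exact hknu (Finset.eq_univ_of_forall h)
        obtain ⟨i, hi, j, hj, he⟩ := hcross (↑(S k)) v b (hconn v b)
          (Finset.mem_coe.mpr (hvS k)) (fun h => hb (Finset.mem_coe.mp h))
        have hiC : y i ≤ Cs k := by
          have := Finset.mem_coe.mp hi
          simpa [hSdef] using this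
        have hjS : j ∈ S (k + 1) := by
          simp only [hSdef, Finset.mem_filter, Finset.mem_univ, true_and]
          calc y j ≤ u i j (Cs k) := hkey i j (Cs k) he hiC
            _ ≤ B (Cs k) := hBle i j (Cs k)
            _ ≤ Cs (k + 1) := le_max_right _ _
        have hss : S k ⊂ S (k + 1) :=
          ⟨hSmono k, fun hsub => (fun h => hj (Finset.mem_coe.mpr h)) (hsub hjS)⟩
        have hlt := Finset.card_lt_card hss
        rcases ih with h | h
        · exact absurd h hknu
        · omega
  have hSn : S n = Finset.univ := by
    rcases hP n with h | h
    · exact h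
    · exfalso
      have := (S n).card_le_univ
      simp only [Finset.card_univ, Fintype.card_fin] at this
      omega
  have hyall : ∀ i, y i ≤ Cs n := by
    intro i
    have : i ∈ S n := hSn ▸ Finset.mem_univ i
    simpa [hSdef] using this
  -- conclude
  have hbot : x v ≤ botV x := le_ciInf hv
  have htopx : topV x ≤ Cs n + x v := by
    refine ciSup_le fun i => ?_
    have := hyall i
    simp only [hy] at this
    linarith
  linarith [hbot, htopx]
end

section
/- Let n be a positive integer and let f : ℝ^n → ℝ^n be a topical function. Then all super-eigenspaces S^λ(f), λ ∈ ℝ, are bounded in the Hilbert semi-norm if and only if f is indecomposable. -/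
/-!
If `f` decomposes along `J`, the points `u • e_J`, `u ≥ 0`, all lie in one super-eigenspace and
have Hilbert semi-norm `u`.

Conversely, shift `x ∈ S^λ` so that `min x = 0`. Indecomposability gives, for every level `B`,
a height `U` such that for each nontrivial `J` some `f_i (U • e_J)` with `i ∉ J` exceeds `B + λ`.
Monotonicity then forbids `x` to jump from coordinates `≤ B` directly to coordinates
`> max B U`, so the number of coordinates below the level grows at each step; after `n` steps,
starting from `B = 0`, every coordinate is bounded.
-/

open Finset

section

variable {n : ℕ} {f : (Fin n → ℝ) → Fin n → ℝ}

def superEigenspace (f : (Fin n → ℝ) → Fin n → ℝ) (lam : ℝ) : Set (Fin n → ℝ) :=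
  {x | ∀ i, f x i ≤ x i + lam}

lemma botV_le (x : Fin n → ℝ) (i : Fin n) : botV x ≤ x i :=
  ciInf_le (Set.finite_range x).bddBelow i

lemma le_topV (x : Fin n → ℝ) (i : Fin n) : x i ≤ topV x :=
  le_ciSup (Set.finite_range x).bddAbove i

lemma topV_le [Nonempty (Fin n)] {x : Fin n → ℝ} {c : ℝ} (h : ∀ i, x i ≤ c) : topV x ≤ c :=
  ciSup_le h

lemma exists_eq_botV [Nonempty (Fin n)] (x : Fin n → ℝ) : ∃ i, x i = botV x :=
  exists_eq_ciInf_of_finite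

lemma eVec_of_mem {J : Set (Fin n)} {i : Fin n} (h : i ∈ J) : eVec J i = 1 :=
  Set.indicator_of_mem h _

lemma eVec_of_notMem {J : Set (Fin n)} {i : Fin n} (h : i ∉ J) : eVec J i = 0 :=
  Set.indicator_of_notMem h _

lemma eVec_nonneg (J : Set (Fin n)) : 0 ≤ eVec J :=
  Set.indicator_nonneg fun _ _ => zero_le_one

lemma le_topV_sub_botV_smul_eVec {J : Set (Fin n)} (hJ : J.Nonempty) (hJc : Jᶜ.Nonempty)
    (u : ℝ) : u ≤ topV (u • eVec J) - botV (u • eVec J) := by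
  obtain ⟨j, hj⟩ := hJ
  obtain ⟨i, hi⟩ := hJc
  have htop := le_topV (u • eVec J) j
  have hbot := botV_le (u • eVec J) i
  simp only [Pi.smul_apply, eVec_of_mem hj, eVec_of_notMem hi, smul_eq_mul] at htop hbot
  linarith

lemma apply_le_apply_zero_add
    (htop : ∀ (x : Fin n → ℝ) (h : ℝ), f (fun i => x i + h) = fun i => f x i + h)
    (hmono : Monotone f) {x : Fin n → ℝ} {c : ℝ}
    (hx : ∀ i, x i ≤ c) (i : Fin n) : f x i ≤ f 0 i + c := by
  have h := congrFun (htop 0 c) i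
  simp only [Pi.zero_apply, zero_add] at h
  exact h ▸ hmono hx i

lemma sub_botV_mem_superEigenspace
    (htop : ∀ (x : Fin n → ℝ) (h : ℝ), f (fun i => x i + h) = fun i => f x i + h)
    {lam : ℝ} {x : Fin n → ℝ}
    (hx : x ∈ superEigenspace f lam) :
    (fun i => x i - botV x) ∈ superEigenspace f lam := by
  intro i
  have h := congrFun (htop x (-botV x)) i
  simp only [← sub_eq_add_neg] at h
  rw [h]
  linarith [hx i]

lemma smul_eVec_apply_le {J : Set (Fin n)} {u : ℝ} (hu : 0 ≤ u) (k : Fin n) :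
    (u • eVec J) k ≤ u := by
  by_cases hk : k ∈ J <;> simp [eVec_of_mem, eVec_of_notMem, hk, hu]

lemma smul_eVec_mem_superEigenspace
    (htop : ∀ (x : Fin n → ℝ) (h : ℝ), f (fun i => x i + h) = fun i => f x i + h)
    (hmono : Monotone f) {J : Set (Fin n)} {M : Fin n → ℝ}
    (hM : ∀ i ∈ Jᶜ, ∀ u : ℝ, f (u • eVec J) i ≤ M i) {lam : ℝ}
    (hlam : ∀ i, max (f 0 i) (M i) ≤ lam) {u : ℝ} (hu : 0 ≤ u) :
    u • eVec J ∈ superEigenspace f lam := by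
  intro i
  by_cases hi : i ∈ J
  · have := apply_le_apply_zero_add htop hmono (smul_eVec_apply_le (J := J) hu) i
    simp only [Pi.smul_apply, eVec_of_mem hi, smul_eq_mul, mul_one]
    linarith [le_of_max_le_left (hlam i)]
  · simp only [Pi.smul_apply, eVec_of_notMem hi, smul_eq_mul, mul_zero, zero_add]
    exact (hM i hi u).trans (le_of_max_le_right (hlam i))

lemma exists_superEigenspace_unbounded
    (htop : ∀ (x : Fin n → ℝ) (h : ℝ), f (fun i => x i + h) = fun i => f x i + h)
    (hmono : Monotone f) (hdec : Decomposable f) :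
    ∃ lam, ∀ M, ∃ x ∈ superEigenspace f lam, M < topV x - botV x := by
  obtain ⟨J, hJ, hJc, hbdd⟩ := hdec
  choose! M hM using hbdd
  obtain ⟨lam, hlam⟩ := (Set.finite_range fun i => max (f 0 i) (M i)).bddAbove
  refine ⟨lam, fun K => ⟨(max K 0 + 1) • eVec J, ?_, ?_⟩⟩
  · exact smul_eVec_mem_superEigenspace htop hmono hM (fun i => hlam ⟨i, rfl⟩) (by positivity)
  · linarith [le_topV_sub_botV_smul_eVec hJ hJc (max K 0 + 1), le_max_left K 0]

lemma exists_escape_level (hmono : Monotone f) (hnd : ¬ Decomposable f) (M : ℝ) :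
    ∃ U : ℝ, ∀ J : Set (Fin n), J.Nonempty → Jᶜ.Nonempty → ∃ i ∈ Jᶜ, M < f (U • eVec J) i := by
  simp only [Decomposable, not_exists, not_and, not_forall, not_le] at hnd
  have hu : ∀ J : Set (Fin n), ∃ u : ℝ,
      J.Nonempty → Jᶜ.Nonempty → ∃ i ∈ Jᶜ, M < f (u • eVec J) i := fun J => by
    by_cases hJ : J.Nonempty ∧ Jᶜ.Nonempty
    · obtain ⟨i, hi, hu⟩ := hnd J hJ.1 hJ.2
      exact (hu M).imp fun u hu _ _ => ⟨i, hi, hu⟩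
    · exact ⟨0, fun h h' => absurd ⟨h, h'⟩ hJ⟩
  choose u hu using hu
  obtain ⟨U, hU⟩ := (Set.finite_range u).bddAbove
  refine ⟨U, fun J hJ hJc => ?_⟩
  obtain ⟨i, hi, hlt⟩ := hu J hJ hJc
  exact ⟨i, hi, hlt.trans_le <|
    hmono (smul_le_smul_of_nonneg_right (hU ⟨J, rfl⟩) (eVec_nonneg J)) i⟩

lemma card_filter_le_lt_card_filter_le_max (hmono : Monotone f) {lam B U : ℝ}
    (hU : ∀ J : Set (Fin n), J.Nonempty → Jᶜ.Nonempty → ∃ i ∈ Jᶜ, B + lam < f (U • eVec J) i)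
    {x : Fin n → ℝ} (hx : x ∈ superEigenspace f lam) (hx0 : 0 ≤ x) (hlow : ∃ i, x i ≤ B)
    (hhigh : ∃ i, B < x i) : #{i | x i ≤ B} < #{i | x i ≤ max B U} := by
  obtain ⟨i, hi, hlt⟩ := hU {j | B < x j} hhigh (by simpa [Set.Nonempty] using hlow)
  simp only [Set.mem_compl_iff, Set.mem_ofPred_eq, not_lt] at hi
  -- otherwise `U • e_J ≤ x` for `J = {j | B < x j}`, and `f x i ≥ f (U • e_J) i > x i + lam`
  have hgap : ∃ j, B < x j ∧ x j ≤ max B U := by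
    by_contra! hgap
    have hle : U • eVec {j | B < x j} ≤ x := fun j => by
      by_cases hj : B < x j
      · simpa [eVec_of_mem (show j ∈ {j | B < x j} from hj)] using
          (le_max_right B U).trans (hgap j hj).le
      · simpa [eVec_of_notMem (show j ∉ {j | B < x j} from hj)] using hx0 j
    linarith [hmono hle i, hx i]
  obtain ⟨j, hBj, hjU⟩ := hgap
  refine card_lt_card (ssubset_iff_of_subset ?_ |>.mpr ⟨j, ?_, ?_⟩)
  · exact monotone_filter_right _ fun k _ hk => hk.trans (le_max_left B U)
  · simpa using hjU
  · simpa using hBj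

lemma exists_card_le_card_filter_le (hmono : Monotone f) (hnd : ¬ Decomposable f) (lam : ℝ)
    {k : ℕ} (hk : k ≤ n) : ∃ B : ℝ, 0 ≤ B ∧ ∀ x ∈ superEigenspace f lam, 0 ≤ x →
      (∃ i, x i ≤ 0) → k ≤ #{i | x i ≤ B} := by
  induction k with
  | zero => exact ⟨0, le_rfl, fun _ _ _ _ => Nat.zero_le _⟩
  | succ k ih =>
    obtain ⟨B, hB, hcard⟩ := ih (Nat.le_of_succ_le hk)
    obtain ⟨U, hU⟩ := exists_escape_level hmono hnd (B + lam)
    refine ⟨max B U, hB.trans (le_max_left B U), fun x hx hx0 hmin => ?_⟩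
    have hsub : #{i | x i ≤ B} ≤ #{i | x i ≤ max B U} :=
      card_le_card (monotone_filter_right _ fun i _ hi => hi.trans (le_max_left B U))
    rcases (hcard x hx hx0 hmin).eq_or_lt with hk_eq | hk_lt
    · have hhigh : ∃ i, B < x i := by
        by_contra! hall
        have : #{i | x i ≤ B} = n := by simp [filter_true_of_mem fun i _ => hall i]
        omega
      have hlow : ∃ i, x i ≤ B := hmin.imp fun i hi => hi.trans hB
      have := card_filter_le_lt_card_filter_le_max hmono hU hx hx0 hlow hhigh
      omega
    · omega

lemma exists_superEigenspace_bounded [Nonempty (Fin n)]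
    (htop : ∀ (x : Fin n → ℝ) (h : ℝ), f (fun i => x i + h) = fun i => f x i + h)
    (hmono : Monotone f) (hnd : ¬ Decomposable f) (lam : ℝ) :
    ∃ M, ∀ x ∈ superEigenspace f lam, topV x - botV x ≤ M := by
  obtain ⟨B, -, hB⟩ := exists_card_le_card_filter_le hmono hnd lam le_rfl
  refine ⟨B, fun x hx => ?_⟩
  set z : Fin n → ℝ := fun i => x i - botV x
  have hz0 : 0 ≤ z := fun i => sub_nonneg.2 (botV_le x i)
  have hzmin : ∃ i, z i ≤ 0 := (exists_eq_botV x).imp fun i hi => by simp [z, hi]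
  have hcard := hB z (sub_botV_mem_superEigenspace htop hx) hz0 hzmin
  have hzB : ∀ i ∈ univ, z i ≤ B :=
    card_filter_eq_iff.1 ((card_filter_le _ _).antisymm (by simpa using hcard))
  have hxB : ∀ i, x i ≤ B + botV x := fun i => by linarith [hzB i (mem_univ i)]
  linarith [topV_le hxB]

end

theorem super_eigenspaces_bounded_iff_indecomposable_additive
    (n : ℕ) (hn : 0 < n) (f : (Fin n → ℝ) → (Fin n → ℝ))
    (htop : ∀ (x : Fin n → ℝ) (h : ℝ), f (fun i => x i + h) = fun i => f x i + h)
    (hmono : Monotone f) :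
    (∀ lam : ℝ, ∃ M : ℝ,
      ∀ x : Fin n → ℝ, (∀ i, f x i ≤ x i + lam) → topV x - botV x ≤ M) ↔
      ¬ Decomposable f := by
  have : Nonempty (Fin n) := ⟨⟨0, hn⟩⟩
  refine ⟨fun hbdd hdec => ?_, exists_superEigenspace_bounded htop hmono⟩
  obtain ⟨lam, hunb⟩ := exists_superEigenspace_unbounded htop hmono hdec
  obtain ⟨M, hM⟩ := hbdd lam
  obtain ⟨x, hx, hlt⟩ := hunb M
  exact (hM x hx).not_gt hlt
end
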